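/- Let f(n) = eⁿ. Among trees with 4 leaves, both 𝔠_{MDM,eⁿ} and 𝔠_{sd,eⁿ} attain their maximum exactly at the comb K₄: for every tree T with 4 leaves not isomorphic to K₄, 𝔠_{MDM,eⁿ}(T) < 𝔠_{MDM,eⁿ}(K₄) = (3/2)(e² + 1) and 𝔠_{sd,eⁿ}(T) < 𝔠_{sd,eⁿ}(K₄) = (3/√2)(e² + 1). -/

import Mathlib

/-- Rooted trees encoded as a root together with the list of subtrees
rooted at its children. -/
inductive MTree : Type
  | node : List MTree → MTree

namespace MTree

/-- Number of leaves of a tree (a single node counts as one leaf). -/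
def leafCount : MTree → ℕ
  | node ts => max 1 (ts.attach.map (fun x => leafCount x.1)).sum
decreasing_by
  have := List.sizeOf_lt_of_mem x.2
  simp only [node.sizeOf_spec]; omega

/-- `deltaF f T = Σ_{v ∈ V(T)} f (deg v)`, the `f`-size of `T`. -/
noncomputable def deltaF (f : ℕ → ℝ) : MTree → ℝ
  | node ts => f ts.length + (ts.attach.map (fun x => deltaF f x.1)).sum
decreasing_by
  have := List.sizeOf_lt_of_mem x.2
  simp only [node.sizeOf_spec]; omega

/-- The Colless-like index relative to a "dissimilarity" `D` and a function `f`: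
the sum, over all internal nodes `v`, of `D` applied to the list of `f`-sizes of
the subtrees rooted at the children of `v`. -/
noncomputable def cIndex (D : List ℝ → ℝ) (f : ℕ → ℝ) : MTree → ℝ
  | node ts => (if ts.isEmpty then 0 else D (ts.map (deltaF f)))
      + (ts.attach.map (fun x => cIndex D f x.1)).sum
decreasing_by
  have := List.sizeOf_lt_of_mem x.2
  simp only [node.sizeOf_spec]; omega

/-- The Colless index of a (bifurcating) tree: the sum over the internal nodes of the
absolute value of the difference of the numbers of leaves of the two child subtrees. -/
def colless : MTree → ℕ
  | node ts =>
      (match ts with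
       | [a, b] => ((a.leafCount : ℤ) - (b.leafCount : ℤ)).natAbs
       | _ => 0)
      + (ts.attach.map (fun x => colless x.1)).sum
decreasing_by
  have := List.sizeOf_lt_of_mem x.2
  simp only [node.sizeOf_spec]; omega

/-- The quadratic Colless index of a (bifurcating) tree. -/
def collessSq : MTree → ℕ
  | node ts =>
      (match ts with
       | [a, b] => ((a.leafCount : ℤ) - (b.leafCount : ℤ)).natAbs ^ 2
       | _ => 0)
      + (ts.attach.map (fun x => collessSq x.1)).sum
decreasing_by
  have := List.sizeOf_lt_of_mem x.2
  simp only [node.sizeOf_spec]; omega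

/-- A tree in the sense of the paper: no node of out-degree 1. -/
inductive WellFormed : MTree → Prop
  | node {ts : List MTree} : ts.length ≠ 1 → (∀ t ∈ ts, WellFormed t) →
      WellFormed (node ts)

/-- A bifurcating tree: every internal node has out-degree exactly 2. -/
inductive Bifurcating : MTree → Prop
  | node {ts : List MTree} : (ts.length = 0 ∨ ts.length = 2) →
      (∀ t ∈ ts, Bifurcating t) → Bifurcating (node ts)

/-- Isomorphism of (list-encoded) trees: the lists of child subtrees match up to
a permutation and recursively isomorphic subtrees. -/
inductive Iso : MTree → MTree → Prop
  | node {ts us vs : List MTree} :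
      List.Forall₂ Iso ts vs → vs.Perm us → Iso (node ts) (node us)

/-- A tree is fully symmetric when, for every internal node, the subtrees rooted at
its children are pairwise isomorphic. -/
inductive FullySymmetric : MTree → Prop
  | node {ts : List MTree} : (∀ s ∈ ts, ∀ t ∈ ts, Iso s t) →
      (∀ t ∈ ts, FullySymmetric t) → FullySymmetric (node ts)

/-- The comb `K_n` with `n ≥ 1` leaves. -/
def comb : ℕ → MTree
  | 0 => node []
  | 1 => node []
  | n + 2 => node [node [], comb (n + 1)]

/-- The star `FS_n`, whose root has `n` children, all of them leaves. -/
def star (n : ℕ) : MTree := node (List.replicate n (node []))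

/-- The median of a list of real numbers. -/
noncomputable def median (l : List ℝ) : ℝ :=
  let s := l.mergeSort (fun a b => a ≤ b)
  if l.length % 2 = 1 then s.getD (l.length / 2) 0
  else (s.getD (l.length / 2 - 1) 0 + s.getD (l.length / 2) 0) / 2

/-- The mean deviation from the median of a list of real numbers. -/
noncomputable def MDM (l : List ℝ) : ℝ :=
  (l.map (fun x => |x - median l|)).sum / l.length

/-- The sample variance of a list of real numbers. -/
noncomputable def svar (l : List ℝ) : ℝ :=
  (l.map (fun x => (x - l.sum / l.length) ^ 2)).sum / ((l.length : ℝ) - 1)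

/-- The sample standard deviation of a list of real numbers. -/
noncomputable def ssd (l : List ℝ) : ℝ := Real.sqrt (svar l)

end MTree

/-!
A tree with four leaves is either isomorphic to the comb or, up to reordering the children of its
root, one of four shapes: a leaf beside the star with three leaves, two cherries, two leaves beside
a cherry, and the star with four leaves. Both MDM and sd are invariant under permutations, vanish
on constant lists, and equal `|a - b| / k` on `[a, b]` and `|c - a| / m` on `[a, a, c]`, with
`(k, m) = (2, 3)` for MDM and `(√2, √3)` for sd. Hence the comb has index `3 (f 2 + f 0) / k`,
while the four other shapes have index `(f 3 + 2 f 0) / k`, `0`, `(f 2 + f 0) / m` and `0`; all of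
these are smaller as soon as `f 3 < f 0 + 3 f 2` and `k < 3 m`. For `f = exp` the first condition
holds because `e < 3`.
-/

namespace MTree

open List

theorem mergeSort_le_eq_of_perm {l l' : List ℝ} (h : l ~ l') :
    l.mergeSort (fun a b => a ≤ b) = l'.mergeSort (fun a b => a ≤ b) :=
  ((mergeSort_perm _ _).trans (h.trans (mergeSort_perm _ _).symm)).eq_of_pairwise'
    (pairwise_mergeSort' _ _) (pairwise_mergeSort' _ _)

theorem median_perm {l l' : List ℝ} (h : l ~ l') : median l = median l' := by
  simp only [median, mergeSort_le_eq_of_perm h, h.length_eq]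

theorem MDM_perm {l l' : List ℝ} (h : l ~ l') : MDM l = MDM l' := by
  simp only [MDM, median_perm h, (h.map _).sum_eq, h.length_eq]

theorem svar_perm {l l' : List ℝ} (h : l ~ l') : svar l = svar l' := by
  simp only [svar, h.sum_eq, h.length_eq, (h.map _).sum_eq]

theorem ssd_perm {l l' : List ℝ} (h : l ~ l') : ssd l = ssd l' := by
  rw [ssd, ssd, svar_perm h]

theorem median_replicate {n : ℕ} (hn : n ≠ 0) (a : ℝ) : median (replicate n a) = a := by
  have hsort : (replicate n a).mergeSort (fun a b => a ≤ b) = replicate n a :=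
    mergeSort_eq_self (· ≤ ·) (pairwise_replicate.2 (Or.inr le_rfl))
  simp only [median, hsort, length_replicate]
  split_ifs
  · exact getD_replicate _ (by omega)
  · rw [getD_replicate _ (by omega), getD_replicate _ (by omega)]; ring

theorem MDM_replicate (n : ℕ) (a : ℝ) : MDM (replicate n a) = 0 := by
  rcases eq_or_ne n 0 with rfl | hn
  · simp [MDM]
  · simp [MDM, median_replicate hn]

theorem svar_replicate (n : ℕ) (a : ℝ) : svar (replicate n a) = 0 := by
  rcases eq_or_ne n 0 with rfl | hn
  · simp [svar]
  · simp [svar, hn]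

theorem ssd_replicate (n : ℕ) (a : ℝ) : ssd (replicate n a) = 0 := by
  rw [ssd, svar_replicate, Real.sqrt_zero]

theorem MDM_pair (a b : ℝ) : MDM [a, b] = |a - b| / 2 := by
  have hmed : median [a, b] = (a + b) / 2 := by
    by_cases h : a ≤ b <;> simp [median, mergeSort, h, add_comm]
  rw [MDM, hmed]
  simp only [map_cons, map_nil, sum_cons, sum_nil, length_cons, length_nil]
  rw [show a - (a + b) / 2 = (a - b) / 2 by ring, show b - (a + b) / 2 = -((a - b) / 2) by ring,
    abs_neg, abs_div]
  norm_num

theorem ssd_pair (a b : ℝ) : ssd [a, b] = |a - b| / Real.sqrt 2 := by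
  have hvar : svar [a, b] = (a - b) ^ 2 / 2 := by
    simp only [svar, map_cons, map_nil, sum_cons, sum_nil, length_cons, length_nil]
    norm_num
    ring
  rw [ssd, hvar, Real.sqrt_div (sq_nonneg _), Real.sqrt_sq_eq_abs]

theorem MDM_triple (a c : ℝ) : MDM [a, a, c] = |c - a| / 3 := by
  have hmed : median [a, a, c] = a := by
    by_cases h : a ≤ c <;> simp [median, mergeSort, h]
  rw [MDM, hmed]
  simp only [map_cons, map_nil, sum_cons, sum_nil, length_cons, length_nil]
  norm_num

theorem ssd_triple (a c : ℝ) : ssd [a, a, c] = |c - a| / Real.sqrt 3 := by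
  have hvar : svar [a, a, c] = (c - a) ^ 2 / 3 := by
    simp only [svar, map_cons, map_nil, sum_cons, sum_nil, length_cons, length_nil]
    norm_num
    ring
  rw [ssd, hvar, Real.sqrt_div (sq_nonneg _), Real.sqrt_sq_eq_abs]

theorem leafCount_node (ts : List MTree) :
    leafCount (node ts) = max 1 (ts.map leafCount).sum := by
  rw [leafCount]; simp

theorem deltaF_node (f : ℕ → ℝ) (ts : List MTree) :
    deltaF f (node ts) = f ts.length + (ts.map (deltaF f)).sum := by
  rw [deltaF]; simp

theorem cIndex_node (D : List ℝ → ℝ) (f : ℕ → ℝ) (ts : List MTree) :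
    cIndex D f (node ts) =
      (if ts.isEmpty then 0 else D (ts.map (deltaF f))) + (ts.map (cIndex D f)).sum := by
  rw [cIndex]; simp

theorem one_le_leafCount : ∀ T : MTree, 1 ≤ T.leafCount
  | node ts => (leafCount_node ts).symm ▸ le_max_left _ _

theorem length_le_sum_map_leafCount (ts : List MTree) : ts.length ≤ (ts.map leafCount).sum := by
  induction ts with
  | nil => simp
  | cons t ts ih =>
    have := one_le_leafCount t
    simp only [length_cons, map_cons, sum_cons]
    omega

theorem eq_leaf_of_leafCount_eq_one {T : MTree} (hw : T.WellFormed) (h : T.leafCount = 1) :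
    T = node [] := by
  rcases hw with @⟨ts, hlen, -⟩
  have := length_le_sum_map_leafCount ts
  rw [leafCount_node] at h
  obtain rfl : ts = [] := eq_nil_of_length_eq_zero (by omega)
  rfl

theorem eq_star_of_sum_map_leafCount_le_length {ts : List MTree} (hw : ∀ t ∈ ts, t.WellFormed)
    (h : (ts.map leafCount).sum ≤ ts.length) : node ts = star ts.length := by
  suffices ts = replicate ts.length (node []) by rw [star, ← this]
  induction ts with
  | nil => rfl
  | cons t ts ih =>
    have hts := length_le_sum_map_leafCount ts
    have ht := one_le_leafCount t
    simp only [map_cons, sum_cons, length_cons] at h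
    rw [length_cons, replicate_succ,
      eq_leaf_of_leafCount_eq_one (hw t mem_cons_self) (by omega),
      ← ih (fun u hu => hw u (mem_cons_of_mem t hu)) (by omega)]

theorem Iso.refl : ∀ T : MTree, T.Iso T
  | MTree.node ts => .node (forall₂_same.2 fun t _ => Iso.refl t) (.refl _)
decreasing_by
  have := List.sizeOf_lt_of_mem ‹t ∈ ts›
  simp only [node.sizeOf_spec]; omega

theorem Iso.pair {a b c d : MTree} (hac : a.Iso c) (hbd : b.Iso d) :
    (MTree.node [a, b]).Iso (MTree.node [c, d]) :=
  .node (.cons hac (.cons hbd .nil)) (.refl _)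

theorem Iso.pair_swap {a b c d : MTree} (hac : a.Iso c) (hbd : b.Iso d) :
    (MTree.node [a, b]).Iso (MTree.node [d, c]) :=
  .node (.cons hac (.cons hbd .nil)) (.swap _ _ _)

theorem sum_map_leafCount_eq {ts : List MTree} {n : ℕ} (hn : 2 ≤ n)
    (h : (node ts).leafCount = n) : (ts.map leafCount).sum = n := by
  rw [leafCount_node] at h
  omega

theorem eq_star_two_of_leafCount_eq_two {T : MTree} (hw : T.WellFormed) (h : T.leafCount = 2) :
    T = star 2 := by
  rcases hw with @⟨ts, hlen, hall⟩
  have hsum := sum_map_leafCount_eq le_rfl h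
  have hle := length_le_sum_map_leafCount ts
  have hne : ts ≠ [] := by rintro rfl; simp at hsum
  have hlen2 : ts.length = 2 := by have := length_pos_iff.2 hne; omega
  exact hlen2 ▸ eq_star_of_sum_map_leafCount_le_length hall (by omega)

theorem eq_star_three_or_iso_comb_three {T : MTree} (hw : T.WellFormed) (h : T.leafCount = 3) :
    T = star 3 ∨ T.Iso (comb 3) := by
  rcases hw with @⟨ts, hlen, hall⟩
  have hsum := sum_map_leafCount_eq (by norm_num) h
  have hle := length_le_sum_map_leafCount ts
  rcases ts with _ | ⟨a, _ | ⟨b, _ | ⟨c, rest⟩⟩⟩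
  · simp at hsum
  · simp at hlen
  · have ha := one_le_leafCount a
    have hb := one_le_leafCount b
    have hwa := hall a (by simp)
    have hwb := hall b (by simp)
    simp only [map_cons, map_nil, sum_cons, sum_nil] at hsum
    right
    rcases (by omega : a.leafCount = 1 ∧ b.leafCount = 2 ∨ a.leafCount = 2 ∧ b.leafCount = 1)
      with ⟨ha, hb⟩ | ⟨ha, hb⟩
    · rw [eq_leaf_of_leafCount_eq_one hwa ha, eq_star_two_of_leafCount_eq_two hwb hb]
      exact Iso.refl _
    · rw [eq_star_two_of_leafCount_eq_two hwa ha, eq_leaf_of_leafCount_eq_one hwb hb]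
      exact Iso.pair_swap (Iso.refl _) (Iso.refl _)
  · left
    have h3 : (a :: b :: c :: rest).length = 3 := by simp only [length_cons] at hle ⊢; omega
    exact h3 ▸ eq_star_of_sum_map_leafCount_le_length hall (by omega)

theorem iso_comb_four_or_perm_of_leafCount_add_eq_four {a b : MTree} (ha : a.WellFormed)
    (hb : b.WellFormed) (h : a.leafCount + b.leafCount = 4) :
    (node [a, b]).Iso (comb 4) ∨ [a, b] ~ [node [], star 3] ∨ [a, b] ~ [star 2, star 2] := by
  have ha1 := one_le_leafCount a
  have hb1 := one_le_leafCount b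
  rcases (by omega : a.leafCount = 1 ∧ b.leafCount = 3 ∨ a.leafCount = 2 ∧ b.leafCount = 2 ∨
      a.leafCount = 3 ∧ b.leafCount = 1) with ⟨ha', hb'⟩ | ⟨ha', hb'⟩ | ⟨ha', hb'⟩
  · rw [eq_leaf_of_leafCount_eq_one ha ha']
    rcases eq_star_three_or_iso_comb_three hb hb' with rfl | hb
    · exact Or.inr (Or.inl (.refl _))
    · exact Or.inl (Iso.pair (Iso.refl _) hb)
  · rw [eq_star_two_of_leafCount_eq_two ha ha', eq_star_two_of_leafCount_eq_two hb hb']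
    exact Or.inr (Or.inr (.refl _))
  · rw [eq_leaf_of_leafCount_eq_one hb hb']
    rcases eq_star_three_or_iso_comb_three ha ha' with rfl | ha
    · exact Or.inr (Or.inl (.swap _ _ _))
    · exact Or.inl (Iso.pair_swap ha (Iso.refl _))

theorem perm_of_leafCount_add_add_eq_four {a b c : MTree} (ha : a.WellFormed)
    (hb : b.WellFormed) (hc : c.WellFormed) (h : a.leafCount + b.leafCount + c.leafCount = 4) :
    [a, b, c] ~ [node [], node [], star 2] := by
  have ha1 := one_le_leafCount a
  have hb1 := one_le_leafCount b
  have hc1 := one_le_leafCount c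
  rcases (by omega : a.leafCount = 2 ∧ b.leafCount = 1 ∧ c.leafCount = 1 ∨
      a.leafCount = 1 ∧ b.leafCount = 2 ∧ c.leafCount = 1 ∨
      a.leafCount = 1 ∧ b.leafCount = 1 ∧ c.leafCount = 2) with
    ⟨ha', hb', hc'⟩ | ⟨ha', hb', hc'⟩ | ⟨ha', hb', hc'⟩
  · rw [eq_star_two_of_leafCount_eq_two ha ha', eq_leaf_of_leafCount_eq_one hb hb',
      eq_leaf_of_leafCount_eq_one hc hc']
    exact perm_append_comm (l₁ := [star 2]) (l₂ := [node [], node []])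
  · rw [eq_leaf_of_leafCount_eq_one ha ha', eq_star_two_of_leafCount_eq_two hb hb',
      eq_leaf_of_leafCount_eq_one hc hc']
    exact .cons _ (.swap _ _ _)
  · rw [eq_leaf_of_leafCount_eq_one ha ha', eq_leaf_of_leafCount_eq_one hb hb',
      eq_star_two_of_leafCount_eq_two hc hc']

theorem iso_comb_four_or_perm_of_leafCount_eq_four {T : MTree} (hw : T.WellFormed)
    (h : T.leafCount = 4) :
    T.Iso (comb 4) ∨ (∃ ts, T = node ts ∧ (ts ~ [node [], star 3] ∨ ts ~ [star 2, star 2] ∨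
      ts ~ [node [], node [], star 2])) ∨ T = star 4 := by
  rcases hw with @⟨ts, hlen, hall⟩
  have hsum := sum_map_leafCount_eq (by norm_num) h
  have hle := length_le_sum_map_leafCount ts
  rcases ts with _ | ⟨a, _ | ⟨b, _ | ⟨c, _ | ⟨d, rest⟩⟩⟩⟩
  · simp at hsum
  · simp at hlen
  · simp only [map_cons, map_nil, sum_cons, sum_nil, add_zero] at hsum
    rcases iso_comb_four_or_perm_of_leafCount_add_eq_four (hall a (by simp)) (hall b (by simp))
      hsum with hiso | hperm | hperm
    · exact Or.inl hiso
    · exact Or.inr (Or.inl ⟨_, rfl, Or.inl hperm⟩)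
    · exact Or.inr (Or.inl ⟨_, rfl, Or.inr (Or.inl hperm)⟩)
  · simp only [map_cons, map_nil, sum_cons, sum_nil, add_zero, ← add_assoc] at hsum
    exact Or.inr (Or.inl ⟨_, rfl, Or.inr (Or.inr
      (perm_of_leafCount_add_add_eq_four (hall a (by simp)) (hall b (by simp)) (hall c (by simp))
        hsum))⟩)
  · have h4 : (a :: b :: c :: d :: rest).length = 4 := by simp only [length_cons] at hle ⊢; omega
    exact Or.inr (Or.inr (h4 ▸ eq_star_of_sum_map_leafCount_le_length hall (by omega)))

theorem deltaF_leaf (f : ℕ → ℝ) : deltaF f (node []) = f 0 := by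
  simp [deltaF_node]

theorem deltaF_star (f : ℕ → ℝ) (n : ℕ) : deltaF f (star n) = f n + n * f 0 := by
  simp [star, deltaF_node]

theorem cIndex_leaf (D : List ℝ → ℝ) (f : ℕ → ℝ) : cIndex D f (node []) = 0 := by
  simp [cIndex_node]

theorem cIndex_star (D : List ℝ → ℝ) (f : ℕ → ℝ) {n : ℕ} (hn : n ≠ 0) :
    cIndex D f (star n) = D (replicate n (f 0)) := by
  simp [star, cIndex_node, hn, deltaF_leaf]

theorem cIndex_node_perm {D : List ℝ → ℝ} (hD : ∀ l l' : List ℝ, l ~ l' → D l = D l')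
    (f : ℕ → ℝ) {ts us : List MTree} (h : ts ~ us) :
    cIndex D f (node ts) = cIndex D f (node us) := by
  simp only [cIndex_node, hD _ _ (h.map _), (h.map _).sum_eq, h.isEmpty_eq]

theorem cIndex_comb_four {D : List ℝ → ℝ} {k : ℝ} (hpair : ∀ a b, D [a, b] = |a - b| / k)
    {f : ℕ → ℝ} (hf : ∀ n, 0 ≤ f n) :
    cIndex D f (comb 4) = 3 / k * (f 2 + f 0) := by
  have hcomb : comb 4 = node [node [], node [node [], star 2]] := rfl
  simp [hcomb, cIndex_node, deltaF_node, deltaF_star, cIndex_star, hpair]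
  rw [abs_of_nonpos (by linarith [hf 0, hf 2]), abs_of_nonpos (by linarith [hf 0, hf 2])]
  ring

theorem cIndex_lt_cIndex_comb_four {D : List ℝ → ℝ} {k m : ℝ}
    (hperm : ∀ l l' : List ℝ, l ~ l' → D l = D l') (hrep : ∀ n a, D (replicate n a) = 0)
    (hpair : ∀ a b, D [a, b] = |a - b| / k) (htriple : ∀ a c, D [a, a, c] = |c - a| / m)
    (hk : 0 < k) (hkm : k < 3 * m) {f : ℕ → ℝ} (hf : ∀ n, 0 ≤ f n) (hf02 : 0 < f 0 + f 2)
    (hf3 : f 3 < f 0 + 3 * f 2) {T : MTree} (hw : T.WellFormed) (hl : T.leafCount = 4)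
    (hT : ¬ T.Iso (comb 4)) : cIndex D f T < cIndex D f (comb 4) := by
  have hmax : 0 < cIndex D f (comb 4) := by
    rw [cIndex_comb_four hpair hf]
    exact mul_pos (by positivity) (by linarith)
  -- `simp` turns `replicate n a` into a list literal before `hrep` could fire.
  have hrep2 : ∀ a, D [a, a] = 0 := hrep 2
  have hrep3 : ∀ a, D [a, a, a] = 0 := hrep 3
  have hrep4 : ∀ a, D [a, a, a, a] = 0 := hrep 4
  rcases iso_comb_four_or_perm_of_leafCount_eq_four hw hl with
    hiso | ⟨ts, rfl, hts | hts | hts⟩ | rfl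
  · exact absurd hiso hT
  · rw [cIndex_node_perm hperm f hts, cIndex_comb_four hpair hf]
    simp [cIndex_node, deltaF_leaf, deltaF_star, cIndex_star, hrep3, hpair]
    rw [abs_of_nonpos (by linarith [hf 0, hf 3]), div_mul_eq_mul_div]
    exact div_lt_div_of_pos_right (by linarith) hk
  · rw [cIndex_node_perm hperm f hts]
    simpa [cIndex_node, deltaF_star, cIndex_star, hrep2, hrep3, hpair] using hmax
  · rw [cIndex_node_perm hperm f hts, cIndex_comb_four hpair hf]
    simp [cIndex_node, deltaF_leaf, deltaF_star, cIndex_star, hrep2, htriple]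
    rw [abs_of_nonneg (by linarith [hf 0, hf 2]), div_mul_eq_mul_div,
      div_lt_div_iff₀ (by linarith) hk]
    nlinarith
  · simpa [cIndex_star, hrep4] using hmax

end MTree

theorem Real.exp_three_lt_one_add_three_mul_exp_two : Real.exp 3 < 1 + 3 * Real.exp 2 := by
  have h : Real.exp 3 = Real.exp 2 * Real.exp 1 := by rw [← Real.exp_add]; norm_num
  have he : Real.exp 1 < 3 := by linarith [Real.exp_one_lt_d9]
  nlinarith [Real.exp_pos 2]

/-- Theorem 19(b): among trees with `4` leaves, both `𝔠_{MDM,eⁿ}` and `𝔠_{sd,eⁿ}`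
attain their maximum exactly at the comb `K₄`, with the stated values. -/
theorem cIndex_MDM_sd_exp_max_four :
    MTree.cIndex MTree.MDM (fun m => Real.exp m) (MTree.comb 4) =
      3 / 2 * (Real.exp 2 + 1) ∧
    MTree.cIndex MTree.ssd (fun m => Real.exp m) (MTree.comb 4) =
      3 / Real.sqrt 2 * (Real.exp 2 + 1) ∧
    ∀ T : MTree, T.WellFormed → T.leafCount = 4 → ¬ T.Iso (MTree.comb 4) →
      MTree.cIndex MTree.MDM (fun m => Real.exp m) T <
        MTree.cIndex MTree.MDM (fun m => Real.exp m) (MTree.comb 4) ∧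
      MTree.cIndex MTree.ssd (fun m => Real.exp m) T <
        MTree.cIndex MTree.ssd (fun m => Real.exp m) (MTree.comb 4) := by
  have hf (n : ℕ) : 0 ≤ Real.exp n := (Real.exp_pos n).le
  have hf02 : 0 < Real.exp (0 : ℕ) + Real.exp (2 : ℕ) := by positivity
  have hf3 : Real.exp (3 : ℕ) < Real.exp (0 : ℕ) + 3 * Real.exp (2 : ℕ) := by
    simpa using Real.exp_three_lt_one_add_three_mul_exp_two
  have hsqrt : Real.sqrt 2 < 3 * Real.sqrt 3 := by
    nlinarith [Real.sqrt_lt_sqrt (by norm_num : (0 : ℝ) ≤ 2) (by norm_num : (2 : ℝ) < 3),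
      Real.sqrt_nonneg 3]
  open MTree in
  exact ⟨by simp [cIndex_comb_four MDM_pair hf], by simp [cIndex_comb_four ssd_pair hf],
    fun T hw hl hT =>
      ⟨cIndex_lt_cIndex_comb_four (fun _ _ => MDM_perm) MDM_replicate MDM_pair MDM_triple
          (by norm_num) (by norm_num) hf hf02 hf3 hw hl hT,
        cIndex_lt_cIndex_comb_four (fun _ _ => ssd_perm) ssd_replicate ssd_pair ssd_triple
          (by positivity) hsqrt hf hf02 hf3 hw hl hT⟩⟩
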